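/- 3·E(2/3)² < 1, where E(2/3) = h((1 + √5/3)/2). (The W state |W⟩ = (1/√3)(|100⟩+|010⟩+|001⟩) has E_s = E_a = 1 and E₁₂ = E₁₃ = E₂₃ = E(2/3) ≈ 0.550048, so its monogamy scores M₁ = M₂ = 1 − 3·E(2/3)² ≈ 0.0923 are strictly positive, i.e. the W state satisfies both monogamy relations E_s² ≥ E₁₂² + E₁₃² + E₂₃² and E_a² ≥ E₁₂² + E₁₃² + E₂₃².) -/

import Mathlib

/-- Binary Shannon entropy (base 2), with the convention `0 * log₂ 0 = 0`
(automatic since `Real.logb 2 0 = 0`). -/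
noncomputable def binEntropy (p : ℝ) : ℝ :=
  -p * Real.logb 2 p - (1 - p) * Real.logb 2 (1 - p)

/-- Entanglement-of-formation function of the concurrence `C`. -/
noncomputable def eof (C : ℝ) : ℝ :=
  binEntropy ((1 + Real.sqrt (1 - C ^ 2)) / 2)

/-!
Writing `q = 1 - p`, bound the two terms of `h(p) · ln 2 = -p ln p - q ln q` by tangent lines of the
concave function `x ↦ -x ln x`: at `x = 1` this gives `-p ln p ≤ q`, and at `x = 1/8` it gives
`-q ln q ≤ q ln 8 - q + 1/8`. Hence `h(p) ≤ 3q + 1/(8 ln 2)`, which for `q = (3 - √5)/6` is about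
`0.5623 < 1/√3`.
-/

namespace Real

lemma negMulLog_le_mul_log_sub_add_inv {c x : ℝ} (hc : 0 < c) (hx : 0 ≤ x) :
    negMulLog x ≤ x * log c - x + c⁻¹ := by
  have hcx : negMulLog (c * x) ≤ 1 - c * x := negMulLog_le_one_sub_self (by positivity)
  rw [negMulLog_mul, negMulLog] at hcx
  have h : c * negMulLog x ≤ c * (x * log c - x + c⁻¹) := by
    rw [mul_add, mul_inv_cancel₀ hc.ne']
    linarith
  exact le_of_mul_le_mul_left h hc

lemma binEntropy_le_mul_log_add_inv {c p : ℝ} (hc : 0 < c) (hp₀ : 0 ≤ p) (hp₁ : p ≤ 1) :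
    binEntropy p ≤ (1 - p) * log c + c⁻¹ := by
  have hp : negMulLog p ≤ 1 - p := negMulLog_le_one_sub_self hp₀
  have hq : negMulLog (1 - p) ≤ (1 - p) * log c - (1 - p) + c⁻¹ :=
    negMulLog_le_mul_log_sub_add_inv hc (by linarith)
  rw [binEntropy_eq_negMulLog_add_negMulLog_one_sub]
  linarith

end Real

lemma binEntropy_eq_div_log_two (p : ℝ) : binEntropy p = Real.binEntropy p / Real.log 2 := by
  simp only [binEntropy, Real.binEntropy, Real.logb, Real.log_inv]
  ring

lemma binEntropy_le_nat_mul_one_sub_add (k : ℕ) {p : ℝ} (hp₀ : 0 ≤ p) (hp₁ : p ≤ 1) :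
    binEntropy p ≤ k * (1 - p) + (2 ^ k * Real.log 2)⁻¹ := by
  have h := Real.binEntropy_le_mul_log_add_inv (c := 2 ^ k) (by positivity) hp₀ hp₁
  rw [Real.log_pow] at h
  calc binEntropy p = Real.binEntropy p / Real.log 2 := binEntropy_eq_div_log_two p
    _ ≤ ((1 - p) * (k * Real.log 2) + (2 ^ k)⁻¹) / Real.log 2 := by gcongr
    _ = k * (1 - p) + (2 ^ k * Real.log 2)⁻¹ := by
      field_simp [(Real.log_pos one_lt_two).ne']

lemma eof_two_thirds : eof (2 / 3) = binEntropy ((3 + √5) / 6) := by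
  have h : √(1 - (2 / 3 : ℝ) ^ 2) = √5 / 3 := by
    rw [show 1 - (2 / 3 : ℝ) ^ 2 = 5 / 3 ^ 2 by norm_num, Real.sqrt_div' _ (by norm_num),
      Real.sqrt_sq (by norm_num)]
  rw [eof, h]
  ring_nf

/-- The W state satisfies both monogamy relations: `3·E(2/3)² < 1`. -/
theorem W_state_monogamy : 3 * (eof (2 / 3)) ^ 2 < 1 := by
  have hsqrt5_gt : 2.236 < √5 := Real.lt_sqrt_of_sq_lt (by norm_num)
  have hsqrt5_lt : √5 < 3 := (Real.sqrt_lt' (by norm_num)).2 (by norm_num)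
  have hp₀ : 0 ≤ (3 + √5) / 6 := by positivity
  have hp₁ : (3 + √5) / 6 ≤ 1 := by linarith
  have hlog2 : (8 * Real.log 2)⁻¹ < 0.1804 := by
    rw [inv_lt_comm₀ (by positivity) (by norm_num)]
    linarith [Real.log_two_gt_d9]
  have hupper : eof (2 / 3) < 0.5624 := by
    rw [eof_two_thirds]
    have h := binEntropy_le_nat_mul_one_sub_add 3 hp₀ hp₁
    push_cast at h
    linarith
  have hlower : 0 ≤ eof (2 / 3) := by
    rw [eof_two_thirds, binEntropy_eq_div_log_two]
    exact div_nonneg (Real.binEntropy_nonneg hp₀ hp₁) (Real.log_nonneg one_le_two)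
  nlinarith
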